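/- arXiv:1310.7992 — 2 statements merged into one kernel-verified Lean document; each statement's English description precedes it below -/
import Mathlib

section
/- Let n ≥ 1, s ∈ (0,1), 1 < p < ∞, and let Q be the unit cube in ℝⁿ. There is a constant c, depending only on n, s and p, such that for every ε > 0 and every u ∈ L^p(ℝⁿ) with u = 0 almost everywhere in ℝⁿ ∖ Q_ε, where Q_ε = εQ, one has ∫_{Q_ε} |u(x)|^p dx ≤ c ε^{sp} [u]_{W^{s,p}(ℝⁿ)}^p. -/
open MeasureTheory ENNReal Pointwise

/-- The unit cube `Q` of `ℝⁿ`. -/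
def unitCube (n : ℕ) : Set (EuclideanSpace ℝ (Fin n)) :=
  {x | ∀ i, x i ∈ Set.Ico (0 : ℝ) 1}

/-- The scaled cube `Q_ε = ε Q`. -/
def scaledCube (n : ℕ) (ε : ℝ) : Set (EuclideanSpace ℝ (Fin n)) :=
  ε • unitCube n

/-- The `p`-th power of the Gagliardo seminorm
`[u]_{W^{s,p}(U)}^p = ∫_U ∫_U |u(x) − u(y)|^p / |x − y|^{n+sp} dx dy`. -/
noncomputable def gagliardoP (n : ℕ) (s p : ℝ) (U : Set (EuclideanSpace ℝ (Fin n)))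
    (u : EuclideanSpace ℝ (Fin n) → ℝ) : ℝ≥0∞ :=
  ∫⁻ x in U, ∫⁻ y in U, ENNReal.ofReal (|u x - u y| ^ p / ‖x - y‖ ^ ((n : ℝ) + s * p))

/-! If `u` vanishes on a set `B`, then for every `x` one has
`μ B · |u x|^p = ∫_B |u x - u y|^p dy`, and when `‖x - y‖ ≤ D` on `B` the integrand is at most
`D^α · |u x - u y|^p / ‖x - y‖^α`. Taking for `B` the translate of `Q_ε` by `ε e_0`, which is
disjoint from `Q_ε`, has volume `εⁿ`, and lies within `(√n + 1) ε` of every point of `Q_ε`,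
and integrating over `x ∈ Q_ε` gives `εⁿ ∫_{Q_ε} |u|^p ≤ ((√n + 1) ε)^{n+sp} [u]^p`. -/

section NormedGroup

variable {E : Type*} [NormedAddCommGroup E]

theorem rpow_le_mul_rpow_div_norm_sub_rpow (u : E → ℝ) {x y : E} {p α D : ℝ} (hp : 0 < p)
    (hα : 0 ≤ α) (hxy : ‖x - y‖ ≤ D) :
    |u x - u y| ^ p ≤ D ^ α * (|u x - u y| ^ p / ‖x - y‖ ^ α) := by
  rcases eq_or_ne x y with rfl | hne
  · simp [Real.zero_rpow hp.ne']
  have hd : 0 < ‖x - y‖ := norm_pos_iff.2 (sub_ne_zero.2 hne)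
  calc |u x - u y| ^ p = ‖x - y‖ ^ α * (|u x - u y| ^ p / ‖x - y‖ ^ α) := by
        rw [mul_div_cancel₀ _ (Real.rpow_pos_of_pos hd α).ne']
    _ ≤ D ^ α * (|u x - u y| ^ p / ‖x - y‖ ^ α) := by gcongr

variable [MeasurableSpace E] {μ : Measure E} {u : E → ℝ} {A B : Set E} {p α D : ℝ}

theorem measure_mul_rpow_le_setLIntegral {x : E} (hB : MeasurableSet B) (hp : 0 < p)
    (hα : 0 ≤ α) (hxB : ∀ y ∈ B, ‖x - y‖ ≤ D) (hu : ∀ᵐ y ∂μ, y ∈ B → u y = 0) :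
    μ B * ENNReal.ofReal (|u x| ^ p) ≤
      ENNReal.ofReal (D ^ α) * ∫⁻ y in B, ENNReal.ofReal (|u x - u y| ^ p / ‖x - y‖ ^ α) ∂μ := by
  calc μ B * ENNReal.ofReal (|u x| ^ p)
      = ∫⁻ y in B, ENNReal.ofReal (|u x - u y| ^ p) ∂μ := by
        rw [mul_comm, ← setLIntegral_const]
        refine setLIntegral_congr_fun_ae hB (hu.mono fun y hy hyB => ?_)
        rw [hy hyB, sub_zero]
    _ ≤ ∫⁻ y in B, ENNReal.ofReal (D ^ α) *
          ENNReal.ofReal (|u x - u y| ^ p / ‖x - y‖ ^ α) ∂μ := by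
        refine setLIntegral_mono' hB fun y hy => ?_
        rw [← ENNReal.ofReal_mul' (by positivity)]
        exact ENNReal.ofReal_le_ofReal (rpow_le_mul_rpow_div_norm_sub_rpow u hp hα (hxB y hy))
    _ = _ := lintegral_const_mul' _ _ ENNReal.ofReal_ne_top

theorem measure_mul_setLIntegral_rpow_le (hA : MeasurableSet A) (hB : MeasurableSet B)
    (hp : 0 < p) (hα : 0 ≤ α) (hAB : ∀ x ∈ A, ∀ y ∈ B, ‖x - y‖ ≤ D)
    (hu : ∀ᵐ y ∂μ, y ∈ B → u y = 0) :
    μ B * ∫⁻ x in A, ENNReal.ofReal (|u x| ^ p) ∂μ ≤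
      ENNReal.ofReal (D ^ α) *
        ∫⁻ x in A, ∫⁻ y in B, ENNReal.ofReal (|u x - u y| ^ p / ‖x - y‖ ^ α) ∂μ ∂μ :=
  calc μ B * ∫⁻ x in A, ENNReal.ofReal (|u x| ^ p) ∂μ
      ≤ ∫⁻ x in A, μ B * ENNReal.ofReal (|u x| ^ p) ∂μ := lintegral_const_mul_le _ _
    _ ≤ ∫⁻ x in A, ENNReal.ofReal (D ^ α) *
          ∫⁻ y in B, ENNReal.ofReal (|u x - u y| ^ p / ‖x - y‖ ^ α) ∂μ ∂μ :=
        setLIntegral_mono' hA fun x hx =>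
          measure_mul_rpow_le_setLIntegral hB hp hα (hAB x hx) hu
    _ = _ := lintegral_const_mul' _ _ ENNReal.ofReal_ne_top

end NormedGroup

theorem EuclideanSpace.dist_le_sqrt_card_mul {ι : Type*} [Fintype ι]
    {x y : EuclideanSpace ℝ ι} {r : ℝ} (hr : 0 ≤ r) (h : ∀ i, dist (x i) (y i) ≤ r) :
    dist x y ≤ √(Fintype.card ι) * r := by
  rw [EuclideanSpace.dist_eq, ← Real.sqrt_sq hr, ← Real.sqrt_mul (Nat.cast_nonneg _)]
  gcongr
  calc ∑ i, dist (x i) (y i) ^ 2 ≤ ∑ _i : ι, r ^ 2 := by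
        gcongr with i
        exact h i
    _ = _ := by simp

theorem unitCube_eq_preimage_pi (n : ℕ) :
    unitCube n = (MeasurableEquiv.toLp 2 (Fin n → ℝ)).symm ⁻¹'
      Set.univ.pi fun _ => Set.Ico 0 1 := by
  ext x
  simp only [unitCube, Set.mem_ofPred_eq, Set.mem_preimage, Set.mem_univ_pi]
  rfl

theorem measurableSet_unitCube (n : ℕ) : MeasurableSet (unitCube n) := by
  rw [unitCube_eq_preimage_pi]
  exact (MeasurableEquiv.measurable _) (MeasurableSet.univ_pi fun _ => measurableSet_Ico)

theorem volume_unitCube (n : ℕ) : volume (unitCube n) = 1 := by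
  rw [unitCube_eq_preimage_pi, (EuclideanSpace.volume_preserving_symm_measurableEquiv_toLp
    (Fin n)).measure_preimage (MeasurableSet.univ_pi fun _ => measurableSet_Ico).nullMeasurableSet,
    volume_pi_pi]
  simp

theorem measurableSet_scaledCube (n : ℕ) (ε : ℝ) : MeasurableSet (scaledCube n ε) :=
  (measurableSet_unitCube n).const_smul₀ ε

theorem volume_scaledCube (n : ℕ) {ε : ℝ} (hε : 0 ≤ ε) :
    volume (scaledCube n ε) = ENNReal.ofReal (ε ^ n) := by
  rw [scaledCube, Measure.addHaar_smul_of_nonneg _ hε, volume_unitCube, finrank_euclideanSpace_fin,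
    mul_one]

theorem mem_scaledCube {n : ℕ} {ε : ℝ} (hε : 0 < ε) {x : EuclideanSpace ℝ (Fin n)} :
    x ∈ scaledCube n ε ↔ ∀ i, x i ∈ Set.Ico 0 ε := by
  rw [scaledCube, Set.mem_smul_set_iff_inv_smul_mem₀ hε.ne']
  simp only [unitCube, Set.mem_ofPred_eq, PiLp.smul_apply, smul_eq_mul, Set.mem_Ico,
    mul_nonneg_iff_of_pos_left (inv_pos.2 hε), inv_mul_lt_iff₀ hε, mul_one]

theorem disjoint_scaledCube_vadd_single {n : ℕ} {ε : ℝ} (hε : 0 < ε) (i : Fin n) :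
    Disjoint (scaledCube n ε) (EuclideanSpace.single i ε +ᵥ scaledCube n ε) := by
  refine Set.disjoint_left.2 fun x hx ⟨z, hz, hzx⟩ => ?_
  have hxi : ε + z i < ε := by simpa [← hzx] using ((mem_scaledCube hε).1 hx i).2
  linarith [((mem_scaledCube hε).1 hz i).1]

theorem norm_sub_le_of_mem_scaledCube {n : ℕ} {ε : ℝ} (hε : 0 < ε)
    {x z : EuclideanSpace ℝ (Fin n)} (hx : x ∈ scaledCube n ε) (hz : z ∈ scaledCube n ε) : ‖x - z‖ ≤ √n * ε := by
  have hcoord : ∀ i, dist (x i) (z i) ≤ ε := fun i => by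
    have hxi := (mem_scaledCube hε).1 hx i
    have hzi := (mem_scaledCube hε).1 hz i
    rw [Real.dist_eq, abs_le]
    constructor <;> linarith [hxi.1, hxi.2, hzi.1, hzi.2]
  simpa [dist_eq_norm] using EuclideanSpace.dist_le_sqrt_card_mul hε.le hcoord

theorem norm_sub_le_of_mem_scaledCube_of_mem_vadd {n : ℕ} {ε : ℝ} (hε : 0 < ε) (i : Fin n)
    {x y : EuclideanSpace ℝ (Fin n)} (hx : x ∈ scaledCube n ε)
    (hy : y ∈ EuclideanSpace.single i ε +ᵥ scaledCube n ε) : ‖x - y‖ ≤ (√n + 1) * ε := by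
  obtain ⟨z, hz, rfl⟩ := hy
  calc ‖x - (EuclideanSpace.single i ε +ᵥ z)‖ ≤ ‖x - z‖ + ‖EuclideanSpace.single i ε‖ := by
        rw [vadd_eq_add, sub_add_eq_sub_sub_swap]
        exact norm_sub_le _ _
    _ ≤ √n * ε + ε := by
        rw [PiLp.norm_single, Real.norm_of_nonneg hε.le]
        gcongr
        exact norm_sub_le_of_mem_scaledCube hε hx hz
    _ = (√n + 1) * ε := by ring

/-- Fractional Poincaré inequality for functions vanishing outside the
cube `Q_ε`: there is a constant `c = c(n, s, p) > 0` such that for every `ε > 0` and every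
`u ∈ L^p(ℝⁿ)` with `u = 0` a.e. in `ℝⁿ ∖ Q_ε`,
`∫_{Q_ε} |u|^p ≤ c ε^{sp} [u]_{W^{s,p}(ℝⁿ)}^p`. -/
theorem fractional_poincare_zero_boundary
    (n : ℕ) (hn : 1 ≤ n) (s p : ℝ) (hs : s ∈ Set.Ioo (0 : ℝ) 1) (hp : 1 < p) :
    ∃ c : ℝ, 0 < c ∧ ∀ ε : ℝ, 0 < ε → ∀ u : EuclideanSpace ℝ (Fin n) → ℝ,
      MemLp u (ENNReal.ofReal p) volume →
      (∀ᵐ x ∂(volume : Measure (EuclideanSpace ℝ (Fin n))),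
        x ∉ scaledCube n ε → u x = 0) →
      ∫⁻ x in scaledCube n ε, ENNReal.ofReal (|u x| ^ p)
        ≤ ENNReal.ofReal (c * ε ^ (s * p)) * gagliardoP n s p Set.univ u := by
  have hp0 : 0 < p := by linarith
  have hα : 0 ≤ (n : ℝ) + s * p := by have := mul_pos hs.1 hp0; positivity
  refine ⟨(√n + 1) ^ ((n : ℝ) + s * p), by positivity, fun ε hε u _ hu => ?_⟩
  set Q := scaledCube n ε
  set i : Fin n := ⟨0, hn⟩
  have hvanish : ∀ᵐ y, y ∈ EuclideanSpace.single i ε +ᵥ Q → u y = 0 :=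
    hu.mono fun y hy hyB => hy ((disjoint_scaledCube_vadd_single hε i).notMem_of_mem_right hyB)
  have key := measure_mul_setLIntegral_rpow_le (measurableSet_scaledCube n ε)
    ((measurableSet_scaledCube n ε).const_vadd _) hp0 hα
    (fun x hx y hy => norm_sub_le_of_mem_scaledCube_of_mem_vadd hε i hx hy) hvanish
  have hscale : ((√n + 1) * ε) ^ ((n : ℝ) + s * p)
      = ε ^ n * ((√n + 1) ^ ((n : ℝ) + s * p) * ε ^ (s * p)) := by
    rw [Real.mul_rpow (by positivity) hε.le, Real.rpow_add hε, Real.rpow_natCast]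
    ring
  rw [measure_vadd, volume_scaledCube n hε.le, hscale, ENNReal.ofReal_mul (by positivity),
    mul_assoc, ENNReal.mul_le_mul_iff_right (by simpa using pow_pos hε n) ENNReal.ofReal_ne_top]
    at key
  refine key.trans (mul_le_mul_right ?_ _)
  exact lintegral_mono' (Measure.restrict_mono (Set.subset_univ _) le_rfl) fun x =>
    lintegral_mono' (Measure.restrict_mono (Set.subset_univ _) le_rfl) le_rfl
end

section
/- Let n ≥ 1, s ∈ (0,1), 1 < p < ∞, and let Q be the unit cube in ℝⁿ. There is a constant c, depending only on n, s and p, such that the following holds: for every ε > 0, every finite set F ⊂ ℤⁿ, and every v ∈ L^p(Ω₁), where Ω₁ = ∪_{z ∈ F} Q_{z,ε} and Q_{z,ε} = ε(z + Q), the piecewise average v̄_ε, defined on each cube Q_{z,ε} by v̄_ε(x) = ε^{−n} ∫_{Q_{z,ε}} v(y) dy for x ∈ Q_{z,ε}, satisfies ∫_{Ω₁} |v − v̄_ε|^p dx ≤ c^p ε^{sp} [v]_{W^{s,p}(Ω₁)}^p. -/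
open MeasureTheory ENNReal

/-- The cube `Q_{z,ε} = ε(z + Q)` for `z ∈ ℤⁿ` and `ε > 0`. -/
def latticeCube (n : ℕ) (z : Fin n → ℤ) (ε : ℝ) : Set (EuclideanSpace ℝ (Fin n)) :=
  {x | ∀ i, x i ∈ Set.Ico (ε * (z i : ℝ)) (ε * ((z i : ℝ) + 1))}

/-! On a cube `Q` of side `ε`, Jensen's inequality for `t ↦ |t|^p` gives
`|v x - ⨍_Q v|^p ≤ ⨍_{y ∈ Q} |v x - v y|^p`. Since `‖x - y‖ ≤ √n ε` on `Q`, the integrand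
`|v x - v y|^p` is at most `(√n ε)^{n+sp}` times the Gagliardo kernel, and dividing by
`|Q| = εⁿ` leaves the factor `√n^{n+sp} ε^{sp}`. Summing over the disjoint cubes and discarding
the interactions between different cubes gives the claim with `c = √n^{(n+sp)/p}`. -/

section Jensen

variable {α E : Type*} [MeasurableSpace α] {μ : Measure α}
  [NormedAddCommGroup E] [NormedSpace ℝ E]

theorem enorm_integral_rpow_le_lintegral [IsProbabilityMeasure μ] {p : ℝ} (hp : 1 ≤ p)
    {g : α → E} (hg : AEStronglyMeasurable g μ) :
    ‖∫ x, g x ∂μ‖ₑ ^ p ≤ ∫⁻ x, ‖g x‖ₑ ^ p ∂μ := by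
  rw [lintegral_rpow_enorm_eq_rpow_eLpNorm' (by linarith)]
  gcongr
  calc ‖∫ x, g x ∂μ‖ₑ ≤ ∫⁻ x, ‖g x‖ₑ ∂μ := enorm_integral_le_lintegral_enorm g
    _ = eLpNorm' g 1 μ := by simp [eLpNorm'_eq_lintegral_enorm]
    _ ≤ eLpNorm' g p μ := eLpNorm'_le_eLpNorm'_of_exponent_le one_pos hp μ hg

theorem lintegral_enorm_sub_average_rpow_le [CompleteSpace E] [IsFiniteMeasure μ] {p : ℝ}
    (hp : 1 ≤ p) {v : α → E} (hv : Integrable v μ) :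
    ∫⁻ x, ‖v x - ⨍ y, v y ∂μ‖ₑ ^ p ∂μ ≤ ∫⁻ x, ⨍⁻ y, ‖v x - v y‖ₑ ^ p ∂μ ∂μ := by
  rcases eq_zero_or_neZero μ with rfl | hμ
  · simp
  refine lintegral_mono fun x => ?_
  rw [average_eq', laverage_eq']
  set ν := (μ Set.univ)⁻¹ • μ
  have hvν : Integrable v ν := hv.smul_measure (ENNReal.inv_ne_top.2 (NeZero.ne _))
  have hsub : v x - ∫ y, v y ∂ν = ∫ y, (v x - v y) ∂ν := by
    rw [integral_sub (integrable_const _) hvν, integral_const, probReal_univ, one_smul]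
  rw [hsub]
  exact enorm_integral_rpow_le_lintegral hp (aestronglyMeasurable_const.sub hvν.1)

end Jensen

theorem ofReal_abs_rpow_eq_enorm_rpow (a : ℝ) {p : ℝ} (hp : 0 ≤ p) :
    ENNReal.ofReal (|a| ^ p) = ‖a‖ₑ ^ p := by
  rw [Real.enorm_eq_ofReal_abs, ENNReal.ofReal_rpow_of_nonneg (abs_nonneg a) hp]

section LatticeCube

variable {n : ℕ}

theorem latticeCube_eq_preimage_pi (z : Fin n → ℤ) (ε : ℝ) :
    latticeCube n z ε = (MeasurableEquiv.toLp 2 (Fin n → ℝ)).symm ⁻¹'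
      Set.univ.pi fun i => Set.Ico (ε * (z i : ℝ)) (ε * ((z i : ℝ) + 1)) := by
  ext x
  simp [latticeCube]

theorem measurableSet_latticeCube (z : Fin n → ℤ) (ε : ℝ) :
    MeasurableSet (latticeCube n z ε) := by
  rw [latticeCube_eq_preimage_pi]
  exact (MeasurableSet.univ_pi fun i => measurableSet_Ico).preimage (MeasurableEquiv.measurable _)

theorem volume_latticeCube (z : Fin n → ℤ) {ε : ℝ} (hε : 0 < ε) :
    volume (latticeCube n z ε) = ENNReal.ofReal (ε ^ n) := by
  rw [latticeCube_eq_preimage_pi,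
    (EuclideanSpace.volume_preserving_symm_measurableEquiv_toLp (Fin n)).measure_preimage
      (MeasurableSet.univ_pi fun i => measurableSet_Ico).nullMeasurableSet,
    volume_pi_pi]
  simp_rw [Real.volume_Ico, show ∀ t : ℝ, ε * (t + 1) - ε * t = ε by intro t; ring]
  rw [Finset.prod_const, Finset.card_univ, Fintype.card_fin, ENNReal.ofReal_pow hε.le]

theorem isFiniteMeasure_restrict_latticeCube (z : Fin n → ℤ) {ε : ℝ} (hε : 0 < ε) :
    IsFiniteMeasure (volume.restrict (latticeCube n z ε)) :=
  isFiniteMeasure_restrict.2 (volume_latticeCube z hε ▸ ENNReal.ofReal_ne_top)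

theorem pairwiseDisjoint_latticeCube {ε : ℝ} (hε : 0 < ε) (F : Set (Fin n → ℤ)) :
    F.PairwiseDisjoint fun z => latticeCube n z ε := by
  intro z _ w _ hzw
  rw [Function.onFun, Set.disjoint_left]
  intro x hxz hxw
  obtain ⟨i, hi⟩ := Function.ne_iff.mp hzw
  obtain ⟨hz₁, hz₂⟩ := hxz i
  obtain ⟨hw₁, hw₂⟩ := hxw i
  rcases lt_or_gt_of_ne hi with h | h
  · have : (z i : ℝ) + 1 ≤ w i := by exact_mod_cast h
    nlinarith
  · have : (w i : ℝ) + 1 ≤ z i := by exact_mod_cast h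
    nlinarith

theorem norm_sub_le_of_mem_latticeCube {z : Fin n → ℤ} {ε : ℝ} (hε : 0 < ε)
    {x y : EuclideanSpace ℝ (Fin n)} (hx : x ∈ latticeCube n z ε) (hy : y ∈ latticeCube n z ε) :
    ‖x - y‖ ≤ Real.sqrt n * ε := by
  have hcoord : ∀ i, ‖(x - y) i‖ ^ 2 ≤ ε ^ 2 := by
    intro i
    obtain ⟨hx₁, hx₂⟩ := hx i
    obtain ⟨hy₁, hy₂⟩ := hy i
    rw [PiLp.sub_apply, Real.norm_eq_abs, sq_abs]
    nlinarith
  calc ‖x - y‖ = √(∑ i, ‖(x - y) i‖ ^ 2) := EuclideanSpace.norm_eq _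
    _ ≤ √(∑ _i : Fin n, ε ^ 2) := Real.sqrt_le_sqrt (Finset.sum_le_sum fun i _ => hcoord i)
    _ = Real.sqrt n * ε := by
      rw [Finset.sum_const, Finset.card_univ, Fintype.card_fin, nsmul_eq_mul,
        Real.sqrt_mul (Nat.cast_nonneg n), Real.sqrt_sq hε.le]

end LatticeCube

section Gagliardo

variable {n : ℕ} {s p : ℝ}

theorem abs_sub_rpow_le_mul_div {X : Type*} [NormedAddCommGroup X] (u : X → ℝ)
    {x y : X} {d e : ℝ} (hp : 0 < p) (he : 0 ≤ e) (hxy : ‖x - y‖ ≤ d) :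
    |u x - u y| ^ p ≤ d ^ e * (|u x - u y| ^ p / ‖x - y‖ ^ e) := by
  rcases (norm_nonneg (x - y)).eq_or_lt with hxy₀ | hxy₀
  · rw [norm_sub_eq_zero_iff.mp hxy₀.symm, sub_self, abs_zero, Real.zero_rpow hp.ne']
    simp
  · have hr : 0 < ‖x - y‖ ^ e := Real.rpow_pos_of_pos hxy₀ e
    calc |u x - u y| ^ p = ‖x - y‖ ^ e * (|u x - u y| ^ p / ‖x - y‖ ^ e) := by field_simp
      _ ≤ d ^ e * (|u x - u y| ^ p / ‖x - y‖ ^ e) := by gcongr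

theorem lintegral_lintegral_rpow_le_gagliardoP {S : Set (EuclideanSpace ℝ (Fin n))}
    (hS : MeasurableSet S) {d : ℝ} (hd : ∀ x ∈ S, ∀ y ∈ S, ‖x - y‖ ≤ d) (hs : 0 ≤ s) (hp : 0 < p)
    (u : EuclideanSpace ℝ (Fin n) → ℝ) :
    ∫⁻ x in S, ∫⁻ y in S, ENNReal.ofReal (|u x - u y| ^ p)
      ≤ ENNReal.ofReal (d ^ ((n : ℝ) + s * p)) * gagliardoP n s p S u := by
  rw [gagliardoP, ← lintegral_const_mul' _ _ ENNReal.ofReal_ne_top]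
  refine setLIntegral_mono' hS fun x hx => ?_
  rw [← lintegral_const_mul' _ _ ENNReal.ofReal_ne_top]
  refine setLIntegral_mono' hS fun y hy => ?_
  have hd₀ : 0 ≤ d := (norm_nonneg _).trans (hd x hx y hy)
  rw [← ENNReal.ofReal_mul (by positivity)]
  exact ENNReal.ofReal_le_ofReal (abs_sub_rpow_le_mul_div u hp (by positivity) (hd x hx y hy))

theorem sum_gagliardoP_le_biUnion {ι : Type*} {F : Finset ι}
    {S : ι → Set (EuclideanSpace ℝ (Fin n))}
    (hS : ∀ i ∈ F, MeasurableSet (S i)) (hdisj : (F : Set ι).PairwiseDisjoint S)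
    (u : EuclideanSpace ℝ (Fin n) → ℝ) :
    ∑ i ∈ F, gagliardoP n s p (S i) u ≤ gagliardoP n s p (⋃ i ∈ F, S i) u := by
  rw [gagliardoP, lintegral_biUnion_finset hdisj hS]
  refine Finset.sum_le_sum fun i hi => lintegral_mono fun x => ?_
  exact lintegral_mono' (Measure.restrict_mono (Set.subset_biUnion_of_mem hi) le_rfl) le_rfl

end Gagliardo

theorem lintegral_sub_cubeAverage_rpow_le {n : ℕ} {s p ε : ℝ} (hs : 0 ≤ s) (hp : 1 ≤ p)
    (hε : 0 < ε) (z : Fin n → ℤ) {v : EuclideanSpace ℝ (Fin n) → ℝ}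
    (hv : IntegrableOn v (latticeCube n z ε)) :
    ∫⁻ x in latticeCube n z ε,
        ENNReal.ofReal (|v x - (∫ y in latticeCube n z ε, v y) / ε ^ n| ^ p)
      ≤ ENNReal.ofReal (Real.sqrt n ^ ((n : ℝ) + s * p) * ε ^ (s * p)) *
          gagliardoP n s p (latticeCube n z ε) v := by
  set Q := latticeCube n z ε
  have hvol : volume Q = ENNReal.ofReal (ε ^ n) := volume_latticeCube z hε
  have hvol₀ : volume Q ≠ 0 := by simp [hvol, hε]
  have hvol_top : volume Q ≠ ∞ := hvol ▸ ENNReal.ofReal_ne_top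
  have := isFiniteMeasure_restrict_latticeCube z hε
  have haverage : (∫ y in Q, v y) / ε ^ n = ⨍ y in Q, v y := by
    rw [setAverage_eq, measureReal_def, hvol, ENNReal.toReal_ofReal (by positivity), smul_eq_mul,
      div_eq_inv_mul]
  have hscale : ENNReal.ofReal ((Real.sqrt n * ε) ^ ((n : ℝ) + s * p))
      = ENNReal.ofReal (Real.sqrt n ^ ((n : ℝ) + s * p) * ε ^ (s * p)) * volume Q := by
    rw [hvol, ← ENNReal.ofReal_mul (by positivity), Real.mul_rpow (by positivity) hε.le,
      Real.rpow_add hε, Real.rpow_natCast, mul_assoc, mul_comm (ε ^ n)]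
  simp_rw [haverage, ofReal_abs_rpow_eq_enorm_rpow _ (zero_le_one.trans hp)]
  calc ∫⁻ x in Q, ‖v x - ⨍ y in Q, v y‖ₑ ^ p
      ≤ ∫⁻ x in Q, ⨍⁻ y, ‖v x - v y‖ₑ ^ p ∂volume.restrict Q :=
        lintegral_enorm_sub_average_rpow_le hp hv
    _ = (∫⁻ x in Q, ∫⁻ y in Q, ‖v x - v y‖ₑ ^ p) / volume Q := by
      simp_rw [laverage_eq, Measure.restrict_apply_univ, div_eq_mul_inv]
      exact lintegral_mul_const' _ _ (ENNReal.inv_ne_top.2 hvol₀)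
    _ ≤ ENNReal.ofReal ((Real.sqrt n * ε) ^ ((n : ℝ) + s * p)) *
          gagliardoP n s p Q v / volume Q := by
      gcongr
      simp_rw [← ofReal_abs_rpow_eq_enorm_rpow _ (zero_le_one.trans hp)]
      exact lintegral_lintegral_rpow_le_gagliardoP (measurableSet_latticeCube z ε)
        (fun x hx y hy => norm_sub_le_of_mem_latticeCube hε hx hy) hs (by linarith) v
    _ = _ := by
      rw [hscale, mul_right_comm, ENNReal.mul_div_cancel_right hvol₀ hvol_top]

/-- There is a constant `c = c(n,s,p) > 0` such that for every `ε > 0`,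
every finite `F ⊂ ℤⁿ` and every `v ∈ L^p(Ω₁)`, where `Ω₁ = ∪_{z ∈ F} Q_{z,ε}`, the
piecewise average `v̄_ε` (equal on each cube `Q_{z,ε}` to `ε^{−n} ∫_{Q_{z,ε}} v`)
satisfies `∫_{Ω₁} |v − v̄_ε|^p ≤ c^p ε^{sp} [v]_{W^{s,p}(Ω₁)}^p`. -/
theorem piecewise_average_poincare
    (n : ℕ) (hn : 1 ≤ n) (s p : ℝ) (hs : s ∈ Set.Ioo (0 : ℝ) 1) (hp : 1 < p) :
    ∃ c : ℝ, 0 < c ∧ ∀ ε : ℝ, 0 < ε → ∀ F : Finset (Fin n → ℤ),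
      ∀ v vbar : EuclideanSpace ℝ (Fin n) → ℝ,
        MemLp v (ENNReal.ofReal p)
          (volume.restrict (⋃ z ∈ F, latticeCube n z ε)) →
        (∀ z ∈ F, ∀ x ∈ latticeCube n z ε,
          vbar x = (∫ y in latticeCube n z ε, v y) / ε ^ (n : ℕ)) →
        ∫⁻ x in ⋃ z ∈ F, latticeCube n z ε, ENNReal.ofReal (|v x - vbar x| ^ p)
          ≤ ENNReal.ofReal (c ^ p * ε ^ (s * p)) *
            gagliardoP n s p (⋃ z ∈ F, latticeCube n z ε) v := by
  obtain ⟨hs₀, -⟩ := hs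
  have hK : 0 < Real.sqrt n ^ ((n : ℝ) + s * p) :=
    Real.rpow_pos_of_pos (Real.sqrt_pos.2 (by exact_mod_cast hn)) _
  refine ⟨(Real.sqrt n ^ ((n : ℝ) + s * p)) ^ p⁻¹, Real.rpow_pos_of_pos hK _, ?_⟩
  intro ε hε F v vbar hv hvbar
  rw [← Real.rpow_mul hK.le, inv_mul_cancel₀ (by linarith), Real.rpow_one,
    lintegral_biUnion_finset (pairwiseDisjoint_latticeCube hε _)
      fun z _ => measurableSet_latticeCube z ε]
  have hvQ : ∀ z ∈ F, IntegrableOn v (latticeCube n z ε) := fun z hz =>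
    have := isFiniteMeasure_restrict_latticeCube z hε
    (hv.mono_measure (Measure.restrict_mono (Set.subset_biUnion_of_mem hz) le_rfl)).integrable
      (ENNReal.one_le_ofReal.2 hp.le)
  calc ∑ z ∈ F, ∫⁻ x in latticeCube n z ε, ENNReal.ofReal (|v x - vbar x| ^ p)
      = ∑ z ∈ F, ∫⁻ x in latticeCube n z ε,
          ENNReal.ofReal (|v x - (∫ y in latticeCube n z ε, v y) / ε ^ n| ^ p) :=
        Finset.sum_congr rfl fun z hz => setLIntegral_congr_fun (measurableSet_latticeCube z ε)
          fun x hx => by rw [hvbar z hz x hx]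
    _ ≤ ∑ z ∈ F, ENNReal.ofReal (Real.sqrt n ^ ((n : ℝ) + s * p) * ε ^ (s * p)) *
          gagliardoP n s p (latticeCube n z ε) v :=
        Finset.sum_le_sum fun z hz =>
          lintegral_sub_cubeAverage_rpow_le hs₀.le hp.le hε z (hvQ z hz)
    _ ≤ _ := by
      rw [← Finset.mul_sum]
      gcongr
      exact sum_gagliardoP_le_biUnion (fun z _ => measurableSet_latticeCube z ε)
        (pairwiseDisjoint_latticeCube hε _) v
end
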